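/- (Freedman's inequality) Let (X_i, F_i)_{i=0}^m be a supermartingale with increments bounded: |X_i - X_{i-1}| ≤ R almost surely for all i. Let V(m) = Σ_{i=1}^m E[(X_i - X_{i-1})² | F_{i-1}] be the quadratic variation. Then for all α, β > 0, P(X_m - X_0 ≥ α and V(m) ≤ β) ≤ exp(-α²/(2(β + Rα))). -/

import Mathlib

/-!
For `0 ≤ t` with `t R ≤ 1` put `c = t² exp (t R) / 2`. The bound `exp y ≤ 1 + y + y² exp s / 2`
for `|y| ≤ s ≤ 1`, applied to `y = t Δ` and combined with `E[Δ | F] ≤ 0`, gives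
`E[exp (t Δ) | F] ≤ exp (c E[Δ² | F])` for an increment `Δ`. Since `V` is predictable,
`Z n = exp (t (X n - X 0) - c V n)` is then a supermartingale up to time `m`, with `Z 0 = 1`.
On the event `X m - X 0 ≥ α, V m ≤ β` we have `Z m ≥ exp (t α - c β)`, so Markov's inequality
bounds its probability by `exp (c β - t α)`. Choosing `t = α / (β + R α)` and using
`exp (t R) ≤ 1 / (1 - t R)` makes this exponent at most `-α² / (2 (β + R α))`.
-/

open MeasureTheory

lemma Real.exp_le_one_add_add_sq_mul_exp {y s : ℝ} (hy : |y| ≤ s) (hs : s ≤ 1) :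
    Real.exp y ≤ 1 + y + y ^ 2 * Real.exp s / 2 := by
  have htaylor := (abs_sub_le_iff.1 (Real.exp_bound (hy.trans hs) (n := 3) (by norm_num))).1
  norm_num [Finset.sum_range_succ, Nat.factorial] at htaylor
  have hcube : |y| ^ 3 ≤ s * y ^ 2 := by
    rw [pow_succ', ← sq_abs y]
    exact mul_le_mul_of_nonneg_right hy (sq_nonneg _)
  have hs0 : 0 ≤ s := (abs_nonneg y).trans hy
  nlinarith [mul_le_mul_of_nonneg_left (Real.add_one_le_exp s) (sq_nonneg y)]

section ConditionalExpectation

variable {Ω : Type*} {m m0 : MeasurableSpace Ω} {μ : Measure Ω} [IsFiniteMeasure μ]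

lemma integrable_exp_mul_of_ae_abs_le {Δ : Ω → ℝ} {R : ℝ} (hΔ : AEStronglyMeasurable Δ μ)
    (hΔR : ∀ᵐ ω ∂μ, |Δ ω| ≤ R) (t : ℝ) : Integrable (fun ω => Real.exp (t * Δ ω)) μ := by
  refine .of_bound (Real.continuous_exp.comp_aestronglyMeasurable (hΔ.const_mul t))
    (Real.exp (|t| * R)) ?_
  filter_upwards [hΔR] with ω h
  rw [Real.norm_of_nonneg (Real.exp_pos _).le, Real.exp_le_exp]
  calc t * Δ ω ≤ |t * Δ ω| := le_abs_self _
    _ = |t| * |Δ ω| := abs_mul _ _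
    _ ≤ |t| * R := mul_le_mul_of_nonneg_left h (abs_nonneg t)

lemma condExp_exp_mul_le_exp_mul_condExp_sq (hm : m ≤ m0) {Δ : Ω → ℝ} {R t : ℝ}
    (hΔ : Integrable Δ μ) (hΔR : ∀ᵐ ω ∂μ, |Δ ω| ≤ R) (hdrift : μ[Δ|m] ≤ᵐ[μ] 0)
    (ht : 0 ≤ t) (htR : t * R ≤ 1) :
    μ[fun ω => Real.exp (t * Δ ω)|m] ≤ᵐ[μ]
      fun ω => Real.exp (t ^ 2 * Real.exp (t * R) / 2 * (μ[fun ω => Δ ω ^ 2|m]) ω) := by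
  set c := t ^ 2 * Real.exp (t * R) / 2
  have hΔ2 : Integrable (fun ω => Δ ω ^ 2) μ := by
    refine .of_bound (hΔ.aestronglyMeasurable.pow 2) (R ^ 2) ?_
    filter_upwards [hΔR] with ω h
    rw [Real.norm_eq_abs, abs_pow]
    exact pow_le_pow_left₀ (abs_nonneg _) h 2
  have hexp := integrable_exp_mul_of_ae_abs_le hΔ.aestronglyMeasurable hΔR t
  have hquad : Integrable ((fun _ => (1 : ℝ)) + t • Δ + c • fun ω => Δ ω ^ 2) μ :=
    ((integrable_const _).add (hΔ.smul t)).add (hΔ2.smul c)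
  have hpointwise : (fun ω => Real.exp (t * Δ ω)) ≤ᵐ[μ]
      (fun _ => (1 : ℝ)) + t • Δ + c • fun ω => Δ ω ^ 2 := by
    filter_upwards [hΔR] with ω h
    have hy : |t * Δ ω| ≤ t * R := by
      rw [abs_mul, abs_of_nonneg ht]; exact mul_le_mul_of_nonneg_left h ht
    calc Real.exp (t * Δ ω) ≤ 1 + t * Δ ω + (t * Δ ω) ^ 2 * Real.exp (t * R) / 2 :=
          Real.exp_le_one_add_add_sq_mul_exp hy htR
      _ = _ := by simp only [Pi.add_apply, Pi.smul_apply, smul_eq_mul, c]; ring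
  filter_upwards [condExp_mono (m := m) hexp hquad hpointwise,
    condExp_add ((integrable_const (1 : ℝ)).add (hΔ.smul t)) (hΔ2.smul c) m,
    condExp_add (integrable_const (1 : ℝ)) (hΔ.smul t) m, condExp_smul t Δ m,
    condExp_smul c (fun ω => Δ ω ^ 2) m, hdrift,
    condExp_nonneg (m := m) (Filter.Eventually.of_forall fun ω => sq_nonneg (Δ ω))]
    with ω hmono hadd₁ hadd₂ hsmul₁ hsmul₂ hdriftω hσ
  simp only [hadd₁, hadd₂, hsmul₁, hsmul₂, condExp_const hm, Pi.add_apply, Pi.smul_apply,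
    smul_eq_mul] at hmono
  simp only [Pi.zero_apply] at hdriftω hσ
  nlinarith [Real.add_one_le_exp (c * (μ[fun ω => Δ ω ^ 2|m]) ω)]

end ConditionalExpectation

lemma MeasureTheory.Supermartingale.condExp_sub_nonpos {Ω ι : Type*} {m0 : MeasurableSpace Ω}
    {μ : Measure Ω} [Preorder ι] {ℱ : Filtration ι m0} {X : ι → Ω → ℝ}
    (hX : Supermartingale X ℱ μ) {i j : ι} (hij : i ≤ j) : μ[X j - X i | ℱ i] ≤ᵐ[μ] 0 := by
  filter_upwards [hX.neg.condExp_sub_nonneg hij, condExp_neg (X j - X i) (ℱ i)] with ω h hneg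
  rw [Pi.neg_apply, Pi.neg_apply, neg_sub_neg, ← neg_sub, hneg] at h
  simpa using h

section Freedman

variable {Ω : Type*} {m0 : MeasurableSpace Ω} {μ : Measure Ω} {ℱ : Filtration ℕ m0}
  {X : ℕ → Ω → ℝ}

variable (μ ℱ X) in
noncomputable def predictableQuadVar (n : ℕ) (ω : Ω) : ℝ :=
  ∑ i ∈ Finset.Icc 1 n, (μ[fun ω' => (X i ω' - X (i - 1) ω') ^ 2 | ℱ (i - 1)]) ω

lemma predictableQuadVar_zero : predictableQuadVar μ ℱ X 0 = 0 := by
  funext ω; simp [predictableQuadVar]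

lemma predictableQuadVar_succ (n : ℕ) :
    predictableQuadVar μ ℱ X (n + 1) =
      predictableQuadVar μ ℱ X n + μ[fun ω => (X (n + 1) ω - X n ω) ^ 2 | ℱ n] := by
  funext ω
  simp [predictableQuadVar, Finset.sum_Icc_succ_top (Nat.le_add_left 1 n)]

lemma predictableQuadVar_nonneg (n : ℕ) : 0 ≤ᵐ[μ] predictableQuadVar μ ℱ X n := by
  have hterm (i : ℕ) := condExp_nonneg (m := ℱ (i - 1)) (μ := μ)
    (Filter.Eventually.of_forall fun ω => sq_nonneg (X i ω - X (i - 1) ω))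
  filter_upwards [ae_all_iff.2 hterm] with ω hω
  exact Finset.sum_nonneg fun i _ => hω i

lemma stronglyMeasurable_predictableQuadVar {n k : ℕ} (hnk : n ≤ k + 1) :
    StronglyMeasurable[ℱ k] (predictableQuadVar μ ℱ X n) := by
  refine Finset.stronglyMeasurable_fun_sum _ fun i hi => stronglyMeasurable_condExp.mono (ℱ.mono ?_)
  simp only [Finset.mem_Icc] at hi
  omega

lemma ae_abs_sub_le_mul_of_abs_increment_le {R : ℝ} {m : ℕ}
    (hbdd : ∀ i, 1 ≤ i → i ≤ m → ∀ᵐ ω ∂μ, |X i ω - X (i - 1) ω| ≤ R) {n : ℕ} (hn : n ≤ m) :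
    ∀ᵐ ω ∂μ, |X n ω - X 0 ω| ≤ n * R := by
  induction n with
  | zero => simp
  | succ k ih =>
    filter_upwards [ih (by omega), hbdd (k + 1) (by omega) hn] with ω hk hstep
    calc |X (k + 1) ω - X 0 ω| ≤ |X (k + 1) ω - X k ω| + |X k ω - X 0 ω| := abs_sub_le _ _ _
      _ ≤ R + k * R := add_le_add hstep hk
      _ = (k + 1 : ℕ) * R := by push_cast; ring

variable (μ ℱ X) in
/-- A supermartingale as long as `c ≥ t² exp (t R) / 2` and the increments stay bounded by `R`. -/
noncomputable def freedmanExp (t c : ℝ) (n : ℕ) (ω : Ω) : ℝ :=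
  Real.exp (t * (X n ω - X 0 ω) - c * predictableQuadVar μ ℱ X n ω)

lemma integrable_freedmanExp [IsFiniteMeasure μ] (hX : StronglyAdapted ℱ X) {R t c : ℝ} {m : ℕ}
    (hbdd : ∀ i, 1 ≤ i → i ≤ m → ∀ᵐ ω ∂μ, |X i ω - X (i - 1) ω| ≤ R) (ht : 0 ≤ t) (hc : 0 ≤ c)
    {n : ℕ} (hn : n ≤ m) : Integrable (freedmanExp μ ℱ X t c n) μ := by
  have hmeas : StronglyMeasurable (freedmanExp μ ℱ X t c n) :=
    Real.continuous_exp.comp_stronglyMeasurable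
      ((((hX n).mono (ℱ.le n)).sub ((hX 0).mono (ℱ.le 0))).const_mul t |>.sub
        (((stronglyMeasurable_predictableQuadVar n.le_succ).mono (ℱ.le n)).const_mul c))
  refine .of_bound hmeas.aestronglyMeasurable (Real.exp (t * (n * R))) ?_
  filter_upwards [ae_abs_sub_le_mul_of_abs_increment_le hbdd hn,
    predictableQuadVar_nonneg (μ := μ) (ℱ := ℱ) (X := X) n] with ω hXn hV
  rw [freedmanExp, Real.norm_of_nonneg (Real.exp_pos _).le, Real.exp_le_exp]
  have := mul_le_mul_of_nonneg_left ((le_abs_self _).trans hXn) ht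
  have := mul_nonneg hc (show 0 ≤ predictableQuadVar μ ℱ X n ω from hV)
  linarith

lemma condExp_freedmanExp_succ_le [IsFiniteMeasure μ] (hX : Supermartingale X ℱ μ)
    {R t c : ℝ} {k : ℕ} (hstep : ∀ᵐ ω ∂μ, |X (k + 1) ω - X k ω| ≤ R) (ht : 0 ≤ t)
    (htR : t * R ≤ 1) (hc : t ^ 2 * Real.exp (t * R) / 2 ≤ c)
    (hint : Integrable (freedmanExp μ ℱ X t c (k + 1)) μ) :
    μ[freedmanExp μ ℱ X t c (k + 1) | ℱ k] ≤ᵐ[μ] freedmanExp μ ℱ X t c k := by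
  set Δ : Ω → ℝ := fun ω => X (k + 1) ω - X k ω
  set W : Ω → ℝ := fun ω =>
    Real.exp (t * (X k ω - X 0 ω) - c * predictableQuadVar μ ℱ X (k + 1) ω)
  have hW : StronglyMeasurable[ℱ k] W :=
    Real.continuous_exp.comp_stronglyMeasurable
      (((hX.stronglyMeasurable k).sub ((hX.stronglyMeasurable 0).mono (ℱ.mono k.zero_le))).const_mul
        t |>.sub ((stronglyMeasurable_predictableQuadVar le_rfl).const_mul c))
  have hsplit : freedmanExp μ ℱ X t c (k + 1) = W * fun ω => Real.exp (t * Δ ω) := by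
    funext ω
    simp only [freedmanExp, Pi.mul_apply, ← Real.exp_add, Δ, W]
    ring_nf
  have hΔ : Integrable Δ μ := (hX.integrable (k + 1)).sub (hX.integrable k)
  have hexp := integrable_exp_mul_of_ae_abs_le hΔ.aestronglyMeasurable hstep t
  rw [hsplit] at hint ⊢
  filter_upwards [condExp_mul_of_stronglyMeasurable_left hW hint hexp,
    condExp_exp_mul_le_exp_mul_condExp_sq (ℱ.le k) hΔ hstep (hX.condExp_sub_nonpos k.le_succ) ht
      htR,
    condExp_nonneg (m := ℱ k) (Filter.Eventually.of_forall fun ω => sq_nonneg (Δ ω))]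
    with ω hpull hbound hσ
  have hE : (μ[fun ω => Real.exp (t * Δ ω) | ℱ k]) ω ≤
      Real.exp (c * (μ[fun ω => Δ ω ^ 2 | ℱ k]) ω) :=
    hbound.trans (Real.exp_le_exp.2 (mul_le_mul_of_nonneg_right hc hσ))
  rw [hpull, Pi.mul_apply]
  calc W ω * (μ[fun ω => Real.exp (t * Δ ω) | ℱ k]) ω
      ≤ W ω * Real.exp (c * (μ[fun ω => Δ ω ^ 2 | ℱ k]) ω) :=
        mul_le_mul_of_nonneg_left hE (Real.exp_pos _).le
    _ = freedmanExp μ ℱ X t c k ω := by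
        simp only [W, Δ, freedmanExp, predictableQuadVar_succ, Pi.add_apply, ← Real.exp_add]
        ring_nf

lemma integral_freedmanExp_le_one [IsProbabilityMeasure μ] (hX : Supermartingale X ℱ μ)
    {R t c : ℝ} {m : ℕ} (hbdd : ∀ i, 1 ≤ i → i ≤ m → ∀ᵐ ω ∂μ, |X i ω - X (i - 1) ω| ≤ R)
    (ht : 0 ≤ t) (htR : t * R ≤ 1) (hc : t ^ 2 * Real.exp (t * R) / 2 ≤ c) {n : ℕ} (hn : n ≤ m) :
    ∫ ω, freedmanExp μ ℱ X t c n ω ∂μ ≤ 1 := by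
  have hint {n : ℕ} (hn : n ≤ m) := integrable_freedmanExp hX.stronglyAdapted hbdd ht
    ((by positivity : 0 ≤ t ^ 2 * Real.exp (t * R) / 2).trans hc) hn
  induction n with
  | zero => simp [freedmanExp, predictableQuadVar_zero]
  | succ k ih =>
    have hstep := hbdd (k + 1) (by omega) hn
    calc ∫ ω, freedmanExp μ ℱ X t c (k + 1) ω ∂μ
        = ∫ ω, (μ[freedmanExp μ ℱ X t c (k + 1) | ℱ k]) ω ∂μ := (integral_condExp (ℱ.le k)).symm
      _ ≤ ∫ ω, freedmanExp μ ℱ X t c k ω ∂μ :=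
          integral_mono_ae integrable_condExp (hint (by omega))
            (condExp_freedmanExp_succ_le hX hstep ht htR hc (hint hn))
      _ ≤ 1 := ih (by omega)

end Freedman

lemma measure_ge_le_ofReal_inv_of_integral_le_one {Ω : Type*} {m0 : MeasurableSpace Ω}
    {μ : Measure Ω} [IsFiniteMeasure μ] {f : Ω → ℝ} (hf0 : 0 ≤ᵐ[μ] f) (hf : Integrable f μ)
    (hf1 : ∫ ω, f ω ∂μ ≤ 1) {ε : ℝ} (hε : 0 < ε) :
    μ {ω | ε ≤ f ω} ≤ ENNReal.ofReal ε⁻¹ := by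
  rw [← ofReal_measureReal]
  refine ENNReal.ofReal_le_ofReal ?_
  rw [← one_div, le_div_iff₀' hε]
  exact (mul_meas_ge_le_integral_of_nonneg hf0 hf ε).trans hf1

lemma freedman_exponent_le {R α β t : ℝ} (hR : 0 ≤ R) (hα : 0 < α) (hβ : 0 < β)
    (ht : t * (β + R * α) = α) :
    α ^ 2 / (2 * (β + R * α)) ≤ t * α - t ^ 2 * Real.exp (t * R) / 2 * β := by
  have hD : 0 < β + R * α := by positivity
  have ht0 : 0 < t := pos_of_mul_pos_left (by rw [ht]; exact hα) hD.le
  have htR : t * R < 1 := by nlinarith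
  -- `exp (t R) ≤ 1 / (1 - t R)`, and `α (1 - t R) = t β`
  have hexp : Real.exp (t * R) * (t * β) ≤ α := by
    have := Real.exp_bound_div_one_sub_of_interval (by positivity) htR
    rw [le_div_iff₀ (by linarith)] at this
    linear_combination α * this + Real.exp (t * R) * ht
  have hlhs : α ^ 2 / (2 * (β + R * α)) = t * α / 2 := by
    rw [div_eq_iff (by positivity)]; linear_combination (-α) * ht
  nlinarith

/-- Freedman's inequality for supermartingales with bounded increments. -/
theorem stmt_12 {Ω : Type*} {m0 : MeasurableSpace Ω} (μ : Measure Ω) [IsProbabilityMeasure μ]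
    (ℱ : Filtration ℕ m0) (X : ℕ → Ω → ℝ) (m : ℕ) (R α β : ℝ)
    (hR : 0 < R) (hα : 0 < α) (hβ : 0 < β)
    (hsm : Supermartingale X ℱ μ)
    (hbdd : ∀ i, 1 ≤ i → i ≤ m → ∀ᵐ ω ∂μ, |X i ω - X (i-1) ω| ≤ R) :
    μ {ω | α ≤ X m ω - X 0 ω ∧
        (∑ i ∈ Finset.Icc 1 m,
          (μ[fun ω' => (X i ω' - X (i-1) ω') ^ 2 | ℱ (i-1)]) ω) ≤ β}
      ≤ ENNReal.ofReal (Real.exp (-α ^ 2 / (2 * (β + R * α)))) := by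
  have hD : 0 < β + R * α := by positivity
  set t := α / (β + R * α)
  set c := t ^ 2 * Real.exp (t * R) / 2
  have ht : t * (β + R * α) = α := div_mul_cancel₀ α hD.ne'
  have ht0 : 0 ≤ t := by positivity
  have htR : t * R ≤ 1 := by
    rw [div_mul_eq_mul_div, div_le_one hD]; linarith
  have hevent : {ω | α ≤ X m ω - X 0 ω ∧ predictableQuadVar μ ℱ X m ω ≤ β} ⊆
      {ω | Real.exp (t * α - c * β) ≤ freedmanExp μ ℱ X t c m ω} := by
    rintro ω ⟨hgain, hvar⟩
    rw [Set.mem_ofPred_eq, freedmanExp, Real.exp_le_exp]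
    nlinarith [mul_le_mul_of_nonneg_left hvar (by positivity : 0 ≤ c)]
  calc _ ≤ _ := measure_mono hevent
    _ ≤ ENNReal.ofReal (Real.exp (t * α - c * β))⁻¹ :=
        measure_ge_le_ofReal_inv_of_integral_le_one (ae_of_all _ fun ω => (Real.exp_pos _).le)
          (integrable_freedmanExp hsm.stronglyAdapted hbdd ht0 (by positivity) le_rfl)
          (integral_freedmanExp_le_one hsm hbdd ht0 htR le_rfl le_rfl) (Real.exp_pos _)
    _ ≤ _ := by
        rw [← Real.exp_neg, neg_div]
        gcongr
        exact freedman_exponent_le hR.le hα hβ ht
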